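/- arXiv:1801.08858 — 4 statements merged into one kernel-verified Lean document; each statement's English description precedes it below -/
import Mathlib

section
/- Let c > 0 and let v : (0,∞) → ℝ be continuously differentiable with v'(r) ≤ -c·v(r)² for all r > 0, and suppose limsup_{r→0⁺} r·v(r) ≤ 1/c. Then v(r) ≤ 1/(c·r) for all r > 0. -/
/-!
Since `v' ≤ -c v² ≤ 0`, `v` is antitone, so if `v r > 0` then `v > 0` on all of `(0, r]`.
There `1/v` has derivative `-v'/v² ≥ c`, hence `1/v(r) - c r ≥ 1/v(x) - c x > -c x` for
`0 < x ≤ r`; letting `x → 0⁺` gives `1/v(r) ≥ c r`. In other words, a solution with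
`v r > 1/(c r)` blows up before reaching `0`.
-/

open Set Filter Topology

section Riccati

variable {D : Set ℝ} {c : ℝ} {v v' : ℝ → ℝ}

theorem antitoneOn_of_riccati (hD : Convex ℝ D) (hc : 0 ≤ c)
    (hderiv : ∀ x ∈ D, HasDerivAt v (v' x) x) (hineq : ∀ x ∈ D, v' x ≤ -c * v x ^ 2) :
    AntitoneOn v D :=
  antitoneOn_of_hasDerivWithinAt_nonpos hD
    (fun x hx => (hderiv x hx).continuousAt.continuousWithinAt)
    (fun x hx => (hderiv x (interior_subset hx)).hasDerivWithinAt)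
    (fun x hx => (hineq x (interior_subset hx)).trans (by nlinarith [sq_nonneg (v x)]))

theorem monotoneOn_inv_sub_mul_of_riccati (hD : Convex ℝ D)
    (hderiv : ∀ x ∈ D, HasDerivAt v (v' x) x) (hne : ∀ x ∈ D, v x ≠ 0)
    (hineq : ∀ x ∈ D, v' x ≤ -c * v x ^ 2) :
    MonotoneOn (fun x => (v x)⁻¹ - c * x) D := by
  have hderiv_inv : ∀ x ∈ D, HasDerivAt (fun x => (v x)⁻¹ - c * x) (-v' x / v x ^ 2 - c) x :=
    fun x hx =>
      (((hderiv x hx).inv (hne x hx)).sub ((hasDerivAt_id' x).const_mul c)).congr_deriv (by ring)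
  refine monotoneOn_of_hasDerivWithinAt_nonneg hD
    (fun x hx => (hderiv_inv x hx).continuousAt.continuousWithinAt)
    (fun x hx => (hderiv_inv x (interior_subset hx)).hasDerivWithinAt) fun x hx => ?_
  have hsq : 0 < v x ^ 2 := by have := hne x (interior_subset hx); positivity
  rw [sub_nonneg, le_div_iff₀ hsq]
  linarith [hineq x (interior_subset hx)]

theorem mul_le_inv_of_riccati {r : ℝ} (hr : 0 < r)
    (hderiv : ∀ x ∈ Ioc 0 r, HasDerivAt v (v' x) x) (hpos : ∀ x ∈ Ioc 0 r, 0 < v x)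
    (hineq : ∀ x ∈ Ioc 0 r, v' x ≤ -c * v x ^ 2) :
    c * r ≤ (v r)⁻¹ := by
  have hmono := monotoneOn_inv_sub_mul_of_riccati (convex_Ioc 0 r) hderiv
    (fun x hx => (hpos x hx).ne') hineq
  have hr_mem : r ∈ Ioc 0 r := ⟨hr, le_rfl⟩
  have hlim : Tendsto (fun x => c * r - c * x) (𝓝[>] 0) (𝓝 (c * r)) :=
    ((continuous_const.sub (continuous_const.mul continuous_id)).tendsto' 0 (c * r)
      (by simp)).mono_left nhdsWithin_le_nhds
  refine le_of_tendsto hlim ?_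
  filter_upwards [Ioc_mem_nhdsGT hr] with x hx
  have := hmono hx hr_mem hx.2
  linarith [inv_pos.2 (hpos x hx)]

end Riccati

theorem riccati_comparison_general_s0 (c : ℝ) (hc : 0 < c) (v v' : ℝ → ℝ)
    (hderiv : ∀ r ∈ Set.Ioi (0 : ℝ), HasDerivAt v (v' r) r)
    (hineq : ∀ r ∈ Set.Ioi (0 : ℝ), v' r ≤ -c * (v r) ^ 2) :
    ∀ r ∈ Set.Ioi (0 : ℝ), v r ≤ 1 / (c * r) := by
  intro r hr
  have hcr : 0 < c * r := mul_pos hc hr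
  rcases le_or_gt (v r) 0 with hv | hv
  · exact hv.trans (one_div_pos.2 hcr).le
  have hanti := antitoneOn_of_riccati (convex_Ioi 0) hc.le hderiv hineq
  have hsub : Ioc 0 r ⊆ Ioi 0 := Ioc_subset_Ioi_self
  have hpos : ∀ x ∈ Ioc 0 r, 0 < v x := fun x hx => hv.trans_le (hanti (hsub hx) hr hx.2)
  rw [one_div, ← le_inv_comm₀ hcr hv]
  exact mul_le_inv_of_riccati hr (fun x hx => hderiv x (hsub hx)) hpos
    (fun x hx => hineq x (hsub hx))

/-- Riccati comparison inequality: if `v` is continuously differentiable on `(0,∞)` with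
`v' ≤ -c·v²` and `limsup_{r→0⁺} r·v(r) ≤ 1/c`, then `v(r) ≤ 1/(c·r)` for all `r > 0`. -/
theorem riccati_comparison (c : ℝ) (hc : 0 < c) (v v' : ℝ → ℝ)
    (hderiv : ∀ r ∈ Set.Ioi (0 : ℝ), HasDerivAt v (v' r) r)
    (hcont : ContinuousOn v' (Set.Ioi (0 : ℝ)))
    (hineq : ∀ r ∈ Set.Ioi (0 : ℝ), v' r ≤ -c * (v r) ^ 2)
    (hlimsup : Filter.limsup (fun r => r * v r) (nhdsWithin 0 (Set.Ioi (0 : ℝ))) ≤ 1 / c) :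
    ∀ r ∈ Set.Ioi (0 : ℝ), v r ≤ 1 / (c * r) :=
  riccati_comparison_general_s0 c hc v v' hderiv hineq
end

section
/- Let φ, u : (0,∞) → ℝ be continuously differentiable functions such that φ'(r) + 2·φ(r)² ≤ u'(r) + 2·u(r)² for all r > 0, and suppose lim_{r→0⁺} 2r·φ(r) = 1 = lim_{r→0⁺} 2r·u(r). Then φ(r) ≤ u(r) for all r > 0. -/
open Set Filter Real Topology

/-!
The difference `w = u - φ` satisfies `w' + g w ≥ 0` with `g = 2(φ + u)`, since
`w' + g w = (u' + 2u²) - (φ' + 2φ²)`. If `G' = g`, the integrating factor makes `e^G w`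
nondecreasing. Near `0` the boundary behaviour gives `g(t) ≥ 1/t`, so `G - log` is nondecreasing
there and `e^{G(t)} = O(t)`; together with `t w(t) → 0` this forces `e^G w → 0` at `0⁺`, hence
`e^G w ≥ 0` and `w ≥ 0`.
-/

lemma IsOpen.exists_hasDerivAt_of_continuousOn {s : Set ℝ} (hs : IsOpen s) (hs' : s.OrdConnected)
    {g : ℝ → ℝ} (hg : ContinuousOn g s) : ∃ G : ℝ → ℝ, ∀ t ∈ s, HasDerivAt G (g t) t := by
  rcases s.eq_empty_or_nonempty with rfl | ⟨c, hc⟩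
  · exact ⟨0, by simp⟩
  refine ⟨fun t => ∫ x in c..t, g x, fun t ht => ?_⟩
  exact intervalIntegral.integral_hasDerivAt_right
    ((hg.mono (hs'.uIcc_subset hc ht)).intervalIntegrable)
    (hg.stronglyMeasurableAtFilter hs t ht) (hg.continuousAt (hs.mem_nhds ht))

lemma monotoneOn_exp_mul_of_deriv_add_mul_nonneg {D : Set ℝ} (hD : Convex ℝ D)
    {w w' G g : ℝ → ℝ} (hw : ∀ t ∈ D, HasDerivAt w (w' t) t)
    (hG : ∀ t ∈ D, HasDerivAt G (g t) t) (h : ∀ t ∈ D, 0 ≤ w' t + g t * w t) :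
    MonotoneOn (fun t => exp (G t) * w t) D := by
  have hderiv : ∀ t ∈ D,
      HasDerivAt (fun t => exp (G t) * w t) (exp (G t) * (w' t + g t * w t)) t := fun t ht =>
    (((hG t ht).exp).mul (hw t ht)).congr_deriv (by ring)
  refine monotoneOn_of_hasDerivWithinAt_nonneg hD
    (fun t ht => (hderiv t ht).continuousAt.continuousWithinAt)
    (fun t ht => (hderiv t (interior_subset ht)).hasDerivWithinAt)
    (fun t ht => mul_nonneg (exp_pos _).le (h t (interior_subset ht)))

lemma exp_div_le_of_inv_le_deriv {G g : ℝ → ℝ} {δ : ℝ}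
    (hG : ∀ t ∈ Ioo 0 δ, HasDerivAt G (g t) t) (hg : ∀ t ∈ Ioo 0 δ, t⁻¹ ≤ g t)
    {s t : ℝ} (ht : 0 < t) (hts : t ≤ s) (hs : s < δ) :
    exp (G t) ≤ exp (G s) / s * t := by
  have hmono : MonotoneOn (fun x => G x - log x) (Ioo 0 δ) := by
    have hderiv : ∀ x ∈ Ioo 0 δ, HasDerivAt (fun x => G x - log x) (g x - x⁻¹) x :=
      fun x hx => (hG x hx).sub (hasDerivAt_log hx.1.ne')
    refine monotoneOn_of_hasDerivWithinAt_nonneg (convex_Ioo 0 δ)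
      (fun x hx => (hderiv x hx).continuousAt.continuousWithinAt)
      (fun x hx => (hderiv x (interior_subset hx)).hasDerivWithinAt)
      (fun x hx => sub_nonneg.mpr (hg x (interior_subset hx)))
  have hs0 : 0 < s := ht.trans_le hts
  have hle := hmono ⟨ht, hts.trans_lt hs⟩ ⟨hs0, hs⟩ hts
  calc exp (G t) = exp (G t - log t) * t := by rw [exp_sub, exp_log ht, div_mul_cancel₀ _ ht.ne']
    _ ≤ exp (G s - log s) * t := by gcongr
    _ = exp (G s) / s * t := by rw [exp_sub, exp_log hs0]

lemma tendsto_exp_mul_nhdsGT_zero {G g w : ℝ → ℝ} (hG : ∀ t ∈ Ioi 0, HasDerivAt G (g t) t)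
    (hg : ∀ᶠ t in 𝓝[>] 0, t⁻¹ ≤ g t) (hw : Tendsto (fun t => t * w t) (𝓝[>] 0) (𝓝 0)) :
    Tendsto (fun t => exp (G t) * w t) (𝓝[>] 0) (𝓝 0) := by
  obtain ⟨δ, hδ, hgδ⟩ := mem_nhdsGT_iff_exists_Ioo_subset.mp hg
  set s := δ / 2
  have hs : s ∈ Ioo 0 δ := ⟨half_pos hδ, half_lt_self hδ⟩
  have hbound : ∀ t ∈ Ioo 0 s, ‖exp (G t) * w t‖ ≤ exp (G s) / s * ‖t * w t‖ := by
    intro t ht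
    have hexp := exp_div_le_of_inv_le_deriv (fun x hx => hG x hx.1) hgδ ht.1 ht.2.le hs.2
    rw [norm_mul, norm_mul, Real.norm_of_nonneg (exp_pos _).le, Real.norm_of_nonneg ht.1.le,
      ← mul_assoc]
    gcongr
  have hlim : Tendsto (fun t => exp (G s) / s * ‖t * w t‖) (𝓝[>] 0) (𝓝 0) := by
    simpa using hw.norm.const_mul (exp (G s) / s)
  refine squeeze_zero_norm' ?_ hlim
  filter_upwards [Ioo_mem_nhdsGT hs.1] with t ht using hbound t ht

lemma MonotoneOn.le_of_tendsto_nhdsGT {α β : Type*} [LinearOrder α] [TopologicalSpace α]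
    [OrderTopology α] [DenselyOrdered α] [NoMaxOrder α] [Preorder β] [TopologicalSpace β]
    [OrderClosedTopology β] {f : α → β} {a x : α} {L : β} (hf : MonotoneOn f (Ioi a))
    (hL : Tendsto f (𝓝[>] a) (𝓝 L)) (hx : a < x) : L ≤ f x :=
  le_of_tendsto hL <| by
    filter_upwards [Ioo_mem_nhdsGT hx] with t ht using hf ht.1 hx ht.2.le

theorem riccati_comparison_general_general (φ u φ' u' : ℝ → ℝ)
    (hφderiv : ∀ r ∈ Set.Ioi (0 : ℝ), HasDerivAt φ (φ' r) r)
    (huderiv : ∀ r ∈ Set.Ioi (0 : ℝ), HasDerivAt u (u' r) r)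
    (hineq : ∀ r ∈ Set.Ioi (0 : ℝ), φ' r + 2 * (φ r) ^ 2 ≤ u' r + 2 * (u r) ^ 2)
    (hφlim : Filter.Tendsto (fun r => 2 * r * φ r) (nhdsWithin 0 (Set.Ioi (0 : ℝ))) (nhds 1))
    (hulim : Filter.Tendsto (fun r => 2 * r * u r) (nhdsWithin 0 (Set.Ioi (0 : ℝ))) (nhds 1)) :
    ∀ r ∈ Set.Ioi (0 : ℝ), φ r ≤ u r := by
  set g : ℝ → ℝ := fun t => 2 * (φ t + u t)
  have hgcont : ContinuousOn g (Ioi 0) := fun t ht =>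
    (((hφderiv t ht).continuousAt.add (huderiv t ht).continuousAt).const_mul 2).continuousWithinAt
  obtain ⟨G, hG⟩ := isOpen_Ioi.exists_hasDerivAt_of_continuousOn ordConnected_Ioi hgcont
  have hmono : MonotoneOn (fun t => exp (G t) * (u t - φ t)) (Ioi 0) :=
    monotoneOn_exp_mul_of_deriv_add_mul_nonneg (convex_Ioi 0)
      (fun t ht => (huderiv t ht).sub (hφderiv t ht)) hG
      (fun t ht => by have := hineq t ht; simp only [g]; nlinarith)
  have hg : ∀ᶠ t in 𝓝[>] 0, t⁻¹ ≤ g t := by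
    filter_upwards [hφlim.eventually (eventually_ge_nhds one_half_lt_one),
      hulim.eventually (eventually_ge_nhds one_half_lt_one), self_mem_nhdsWithin]
      with t hφt hut (ht : 0 < t)
    rw [inv_le_iff_one_le_mul₀ ht]
    simp only [g]; linarith
  have hw : Tendsto (fun t => t * (u t - φ t)) (𝓝[>] 0) (𝓝 0) := by
    simpa [mul_sub, ← mul_assoc] using (hulim.sub hφlim).const_mul 2⁻¹
  intro r hr
  have hprod := hmono.le_of_tendsto_nhdsGT (tendsto_exp_mul_nhdsGT_zero hG hg hw) hr
  exact sub_nonneg.mp (nonneg_of_mul_nonneg_right hprod (exp_pos _))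

/-- Generalized Riccati comparison: if `φ' + 2φ² ≤ u' + 2u²` on `(0,∞)` for continuously
differentiable `φ, u`, and both `2r·φ(r)` and `2r·u(r)` tend to `1` as `r → 0⁺`,
then `φ ≤ u` on `(0,∞)`. -/
theorem riccati_comparison_general (φ u φ' u' : ℝ → ℝ)
    (hφderiv : ∀ r ∈ Set.Ioi (0 : ℝ), HasDerivAt φ (φ' r) r)
    (hφcont : ContinuousOn φ' (Set.Ioi (0 : ℝ)))
    (huderiv : ∀ r ∈ Set.Ioi (0 : ℝ), HasDerivAt u (u' r) r)
    (hucont : ContinuousOn u' (Set.Ioi (0 : ℝ)))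
    (hineq : ∀ r ∈ Set.Ioi (0 : ℝ), φ' r + 2 * (φ r) ^ 2 ≤ u' r + 2 * (u r) ^ 2)
    (hφlim : Filter.Tendsto (fun r => 2 * r * φ r) (nhdsWithin 0 (Set.Ioi (0 : ℝ))) (nhds 1))
    (hulim : Filter.Tendsto (fun r => 2 * r * u r) (nhdsWithin 0 (Set.Ioi (0 : ℝ))) (nhds 1)) :
    ∀ r ∈ Set.Ioi (0 : ℝ), φ r ≤ u r :=
  riccati_comparison_general_general φ u φ' u' hφderiv huderiv hineq hφlim hulim
end

section
/- Let k > 0 and let M : (0,∞) → (0,∞) satisfy the three-circle inequality. Suppose there exist C > 0 and r₀ > 0 such that M(r) ≤ C·r^k for all 0 < r < r₀. Then the function r ↦ M(r)/r^k is monotone nondecreasing on (0,∞). -/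
/-- `M : (0,∞) → (0,∞)` satisfies the three-circle inequality if for all
`0 < r₁ ≤ r₂ ≤ r₃`,
`log(r₃/r₁)·log M(r₂) ≤ log(r₃/r₂)·log M(r₁) + log(r₂/r₁)·log M(r₃)`. -/
def ThreeCircle (M : ℝ → ℝ) : Prop :=
  ∀ r₁ r₂ r₃ : ℝ, 0 < r₁ → r₁ ≤ r₂ → r₂ ≤ r₃ →
    Real.log (r₃ / r₁) * Real.log (M r₂) ≤
      Real.log (r₃ / r₂) * Real.log (M r₁) + Real.log (r₂ / r₁) * Real.log (M r₃)

/-- If `M : (0,∞) → (0,∞)` satisfies the three-circle inequality and `M(r) ≤ C·r^k` for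
all sufficiently small `r > 0` (with `k > 0`), then `r ↦ M(r)/r^k` is monotone
nondecreasing on `(0,∞)`. -/
theorem threeCircle_vanishing_order_monotone (k : ℝ) (hk : 0 < k) (M : ℝ → ℝ)
    (hMpos : ∀ r ∈ Set.Ioi (0 : ℝ), 0 < M r) (htc : ThreeCircle M)
    (hbound : ∃ C > (0 : ℝ), ∃ r₀ > (0 : ℝ), ∀ r : ℝ, 0 < r → r < r₀ → M r ≤ C * r ^ k) :
    MonotoneOn (fun r => M r / r ^ k) (Set.Ioi (0 : ℝ)) := by
  obtain ⟨C, hC, r₀, hr₀, hCb⟩ := hbound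
  intro a ha b hb hab
  simp only [Set.mem_Ioi] at ha hb
  set La := Real.log (M a) with hLa
  set Lb := Real.log (M b) with hLb
  have hEle : La - Lb + k * (Real.log b - Real.log a) ≤ 0 := by
    by_contra hE
    push_neg at hE
    set E := La - Lb + k * (Real.log b - Real.log a) with hEdef
    set D := (Real.log b - Real.log a) * Real.log C - Real.log b * La + Real.log a * Lb
      with hDdef
    have key : ∀ t : ℝ, Real.exp (-t) < r₀ → Real.exp (-t) ≤ a → t * E ≤ D := by
      intro t ht1 ht2
      set r := Real.exp (-t) with hr
      have hrpos : 0 < r := Real.exp_pos _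
      have h3 := htc r a b hrpos ht2 hab
      have hMr : Real.log (M r) ≤ Real.log C + k * (-t) := by
        have hle := hCb r hrpos ht1
        have h1 : Real.log (M r) ≤ Real.log (C * r ^ k) :=
          Real.log_le_log (hMpos r hrpos) hle
        have h2 : Real.log (C * r ^ k) = Real.log C + k * (-t) := by
          rw [Real.log_mul (ne_of_gt hC) (by positivity), Real.log_rpow hrpos, hr,
            Real.log_exp]
        linarith
      have hba : 0 ≤ Real.log (b / a) :=
        Real.log_nonneg (by rw [le_div_iff₀ ha]; linarith)
      have h4 : Real.log (b / a) * Real.log (M r) ≤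
          Real.log (b / a) * (Real.log C + k * (-t)) :=
        mul_le_mul_of_nonneg_left hMr hba
      have hlr : Real.log r = -t := by rw [hr, Real.log_exp]
      rw [Real.log_div (ne_of_gt hb) (ne_of_gt hrpos),
        Real.log_div (ne_of_gt hb) (ne_of_gt ha),
        Real.log_div (ne_of_gt ha) (ne_of_gt hrpos), hlr] at h3
      rw [Real.log_div (ne_of_gt hb) (ne_of_gt ha)] at h4
      rw [hEdef, hDdef]
      nlinarith [h3, h4]
    set T := max ((|D| + 1) / E) (1 + max (-Real.log r₀) (-Real.log a)) with hT
    have hTr₀ : -Real.log r₀ < T :=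
      lt_of_lt_of_le (by linarith [le_max_left (-Real.log r₀) (-Real.log a)])
        (le_max_right _ _)
    have hTa : -Real.log a < T :=
      lt_of_lt_of_le (by linarith [le_max_right (-Real.log r₀) (-Real.log a)])
        (le_max_right _ _)
    have hT1 : Real.exp (-T) < r₀ := by
      rw [← Real.exp_log hr₀]
      exact Real.exp_lt_exp.2 (by linarith)
    have hT2 : Real.exp (-T) ≤ a := by
      rw [← Real.exp_log ha]
      exact Real.exp_le_exp.2 (by linarith)
    have hTE : |D| + 1 ≤ T * E := by
      have h1 : (|D| + 1) / E ≤ T := le_max_left _ _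
      have h2 : (|D| + 1) / E * E = |D| + 1 := div_mul_cancel₀ _ (ne_of_gt hE)
      calc |D| + 1 = (|D| + 1) / E * E := h2.symm
        _ ≤ T * E := mul_le_mul_of_nonneg_right h1 (le_of_lt hE)
    have hcontra := key T hT1 hT2
    have : D < T * E := lt_of_le_of_lt (le_abs_self D) (by linarith)
    linarith
  have hak : (0:ℝ) < a ^ k := Real.rpow_pos_of_pos ha k
  have hbk : (0:ℝ) < b ^ k := Real.rpow_pos_of_pos hb k
  have hMa := hMpos a ha
  have hMb := hMpos b hb
  have hlog : Real.log (M a / a ^ k) ≤ Real.log (M b / b ^ k) := by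
    rw [Real.log_div (ne_of_gt hMa) (ne_of_gt hak),
      Real.log_div (ne_of_gt hMb) (ne_of_gt hbk),
      Real.log_rpow ha, Real.log_rpow hb]
    linarith
  exact (Real.log_le_log_iff (by positivity) (by positivity)).1 hlog
end

section
/- Let 0 < R ≤ ∞, let d > 0, let h : (0,R) → ℝ be strictly increasing with lim_{r→0⁺}(h(r) − log r) = 0, and let M : (0,R) → (0,∞) satisfy the three-circle inequality with respect to h. If there exist C > 0 and r₀ ∈ (0,R) such that M(r) ≤ C·r^d for all 0 < r < r₀, then the function r ↦ M(r)/exp(d·h(r)) is monotone nondecreasing on (0,R). -/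
open Filter
open scoped ENNReal

/-- Extended three-circle monotonicity: let `0 < R ≤ ∞`, `d > 0`, let `h` be strictly
increasing on `(0,R)` with `h(r) - log r → 0` as `r → 0⁺`, and let `M : (0,R) → (0,∞)`
satisfy the three-circle inequality with respect to `h`. If `M(r) ≤ C·r^d` for all
sufficiently small `r > 0`, then `r ↦ M(r)/exp(d·h(r))` is monotone nondecreasing
on `(0,R)`. -/
theorem threeCircle_wrt_h_monotone (R : ℝ≥0∞) (hR : 0 < R) (d : ℝ) (hd : 0 < d)
    (h M : ℝ → ℝ)
    (hmono : StrictMonoOn h {r : ℝ | 0 < r ∧ ENNReal.ofReal r < R})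
    (hasymp : Tendsto (fun r => h r - Real.log r) (nhdsWithin 0 (Set.Ioi (0 : ℝ))) (nhds 0))
    (hMpos : ∀ r : ℝ, 0 < r → ENNReal.ofReal r < R → 0 < M r)
    (htc : ∀ r₁ r₂ r₃ : ℝ, 0 < r₁ → r₁ ≤ r₂ → r₂ ≤ r₃ → ENNReal.ofReal r₃ < R →
      (h r₃ - h r₁) * Real.log (M r₂) ≤
        (h r₃ - h r₂) * Real.log (M r₁) + (h r₂ - h r₁) * Real.log (M r₃))
    (hbound : ∃ C > (0 : ℝ), ∃ r₀ : ℝ, 0 < r₀ ∧ ENNReal.ofReal r₀ < R ∧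
      ∀ r : ℝ, 0 < r → r < r₀ → M r ≤ C * r ^ d) :
    MonotoneOn (fun r => M r / Real.exp (d * h r)) {r : ℝ | 0 < r ∧ ENNReal.ofReal r < R} := by
  obtain ⟨C, hC, r₀, hr₀, hr₀R, hCb⟩ := hbound
  intro a ha b hb hab
  obtain ⟨ha0, haR⟩ := ha
  obtain ⟨hb0, hbR⟩ := hb
  have hMa := hMpos a ha0 haR
  have hMb := hMpos b hb0 hbR
  have hhab : h a ≤ h b := hmono.monotoneOn ⟨ha0, haR⟩ ⟨hb0, hbR⟩ hab
  -- key log inequality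
  have key : Real.log (M a) - d * h a ≤ Real.log (M b) - d * h b := by
    set l := nhdsWithin (0:ℝ) (Set.Ioi (0:ℝ)) with hl
    have hlog : Tendsto Real.log l atBot := Real.tendsto_log_nhdsGT_zero
    have hhbot : Tendsto h l atBot := by
      have := hasymp.add_atBot hlog
      simpa using this
    have hden : Tendsto (fun r => h b - h r) l atTop := by
      have hneg : Tendsto (fun r => -h r) l atTop := tendsto_neg_atBot_atTop.comp hhbot
      simpa [sub_eq_add_neg] using tendsto_atTop_add_const_left l (h b) hneg
    have hnum : Tendsto
        (fun r => (h b - h a) * (Real.log C - d * (h r - Real.log r) + d * h b - Real.log (M b)))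
        l (nhds ((h b - h a) * (Real.log C - d * 0 + d * h b - Real.log (M b)))) :=
      Tendsto.const_mul _
        (((tendsto_const_nhds.sub (hasymp.const_mul d)).add tendsto_const_nhds).sub
          tendsto_const_nhds)
    have hquot : Tendsto
        (fun r => (h b - h a) * (Real.log C - d * (h r - Real.log r) + d * h b - Real.log (M b))
          / (h b - h r)) l (nhds 0) := hnum.div_atTop hden
    have hev : ∀ᶠ r in l,
        Real.log (M a) - d * h a - (Real.log (M b) - d * h b) ≤
        (h b - h a) * (Real.log C - d * (h r - Real.log r) + d * h b - Real.log (M b))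
          / (h b - h r) := by
      have h1 : ∀ᶠ r in l, r ∈ Set.Ioi (0:ℝ) := self_mem_nhdsWithin
      have h2 : ∀ᶠ r in l, r < min a r₀ :=
        mem_nhdsWithin_of_mem_nhds (Iio_mem_nhds (lt_min ha0 hr₀))
      filter_upwards [h1, h2] with r hr hrlt
      have hr0 : (0:ℝ) < r := hr
      have hra : r < a := hrlt.trans_le (min_le_left _ _)
      have hrr₀ : r < r₀ := hrlt.trans_le (min_le_right _ _)
      have hrR : ENNReal.ofReal r < R :=
        lt_of_le_of_lt (ENNReal.ofReal_le_ofReal hra.le) haR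
      have hhr : h r < h a := hmono ⟨hr0, hrR⟩ ⟨ha0, haR⟩ hra
      have hdenpos : 0 < h b - h r := by linarith
      rw [le_div_iff₀ hdenpos]
      have hTC := htc r a b hr0 hra.le hab hbR
      have hMr := hMpos r hr0 hrR
      have hlogMr : Real.log (M r) ≤ Real.log C + d * Real.log r := by
        calc Real.log (M r) ≤ Real.log (C * r ^ d) :=
              Real.log_le_log hMr (hCb r hr0 hrr₀)
          _ = Real.log C + d * Real.log r := by
              rw [Real.log_mul hC.ne' (by positivity), Real.log_rpow hr0]
      have hA : (h b - h a) * Real.log (M r) ≤ (h b - h a) * (Real.log C + d * Real.log r) :=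
        mul_le_mul_of_nonneg_left hlogMr (by linarith)
      nlinarith [hTC, hA]
    have := ge_of_tendsto hquot hev
    linarith
  -- conclude
  simp only
  rw [div_le_div_iff₀ (Real.exp_pos _) (Real.exp_pos _)]
  have : Real.log (M a) + d * h b ≤ Real.log (M b) + d * h a := by linarith
  calc M a * Real.exp (d * h b) = Real.exp (Real.log (M a) + d * h b) := by
        rw [Real.exp_add, Real.exp_log hMa]
    _ ≤ Real.exp (Real.log (M b) + d * h a) := Real.exp_le_exp.mpr this
    _ = M b * Real.exp (d * h a) := by rw [Real.exp_add, Real.exp_log hMb]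
end
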